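/- Let p be a prime, 0 < α < 1, and define C_α(θ) := −Γ_p((1+α)/2 + θ) · Γ_p((1+α)/2 − θ) for real θ ≥ 0 with θ ≠ (1+α)/2. Then: (1) C_α(0) = −(Γ_p((1+α)/2))²; (2) C_α((1−α)/2) = 0; (3) C_α is continuous and strictly increasing on [0,(1+α)/2); (4) C_α(θ) → +∞ as θ ↑ (1+α)/2; (5) C_α is continuous and strictly increasing on ((1+α)/2, ∞) with C_α(θ) → −∞ as θ ↓ (1+α)/2; (6) C_α(θ) → −p^α as θ → +∞, and −p^α < C_α(0). -/

import Mathlib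

open Filter

/-- The `p`-adic Gamma function `Γ_p(z) = (1 - p^(z-1)) / (1 - p^(-z))`. -/
noncomputable def gammaP (p : ℕ) (z : ℝ) : ℝ :=
  (1 - (p : ℝ) ^ (z - 1)) / (1 - (p : ℝ) ^ (-z))

/-- The function `C_α(θ) = -Γ_p((1+α)/2 + θ) Γ_p((1+α)/2 - θ)`. -/
noncomputable def Cfun (p : ℕ) (α θ : ℝ) : ℝ :=
  -(gammaP p ((1 + α) / 2 + θ) * gammaP p ((1 + α) / 2 - θ))

/-! In the variables `x = p^((1+α)/2)` and `u = p^θ` both factors `Γ_p((1+α)/2 ± θ)` are rational,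
and their product collapses to a Möbius function of `cosh (θ log p)`:
`C_α(θ) = -p^α + K / (cosh ((1+α)/2 · log p) - cosh (θ log p))` with
`K = p^((1+α)/2) (p - 1) (p^α - 1) / (2p) > 0`. As `cosh (θ log p)` increases strictly from `1` to
`∞` on `θ ≥ 0`, everything follows from the shape of `t ↦ -p^α + K / (m - t)` on either side of
its pole `m`. -/

open Set Real Topology

section MobiusFunction

variable {L K m : ℝ}

theorem strictMonoOn_const_add_div_sub_Iio (hK : 0 < K) :
    StrictMonoOn (fun t => L + K / (m - t)) (Iio m) := by
  intro a _ b (hb : b < m) hab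
  have : 0 < m - b := sub_pos.2 hb
  dsimp only
  gcongr

theorem strictMonoOn_const_add_div_sub_Ioi (hK : 0 < K) :
    StrictMonoOn (fun t => L + K / (m - t)) (Ioi m) := by
  intro a (ha : m < a) b _ hab
  have : 0 < a - m := sub_pos.2 ha
  dsimp only
  rw [← neg_sub a m, ← neg_sub b m, div_neg, div_neg]
  gcongr

theorem tendsto_const_add_div_sub_nhdsLT (hK : 0 < K) :
    Tendsto (fun t => L + K / (m - t)) (𝓝[<] m) atTop := by
  have hsub : Tendsto (fun t => m - t) (𝓝[<] m) (𝓝[>] 0) :=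
    tendsto_nhdsWithin_of_tendsto_nhds_of_eventually_within _
      (((continuous_sub_left m).tendsto' m 0 (sub_self m)).mono_left nhdsWithin_le_nhds)
      (eventually_nhdsWithin_of_forall fun _ ht => mem_Ioi.2 (sub_pos.2 ht))
  refine tendsto_atTop_add_const_left _ L ?_
  simp only [div_eq_mul_inv]
  exact hsub.inv_tendsto_nhdsGT_zero.const_mul_atTop hK

theorem tendsto_const_add_div_sub_nhdsGT (hK : 0 < K) :
    Tendsto (fun t => L + K / (m - t)) (𝓝[>] m) atBot := by
  have hsub : Tendsto (fun t => t - m) (𝓝[>] m) (𝓝[>] 0) :=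
    tendsto_nhdsWithin_of_tendsto_nhds_of_eventually_within _
      (((continuous_sub_right m).tendsto' m 0 (sub_self m)).mono_left nhdsWithin_le_nhds)
      (eventually_nhdsWithin_of_forall fun _ ht => mem_Ioi.2 (sub_pos.2 ht))
  refine tendsto_atBot_add_const_left _ L ?_
  simp only [← neg_sub _ m, div_eq_mul_inv, inv_neg, mul_neg]
  exact tendsto_neg_atTop_atBot.comp (hsub.inv_tendsto_nhdsGT_zero.const_mul_atTop hK)

theorem tendsto_const_add_div_sub_atTop :
    Tendsto (fun t => L + K / (m - t)) atTop (𝓝 L) := by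
  have hsub : Tendsto (fun t => m - t) atTop atBot :=
    tendsto_atBot_add_const_left _ m tendsto_neg_atTop_atBot
  simpa using tendsto_const_nhds.add (hsub.const_div_atBot K)

end MobiusFunction

section PoleOfMonotone

variable {f H : ℝ → ℝ} {L K s : ℝ}

theorem continuousOn_strictMonoOn_tendsto_below_of_eqOn (hK : 0 < K) (hs : 0 < s)
    (hHc : Continuous H) (hHm : StrictMonoOn H (Ici 0))
    (hf : EqOn f (fun θ => L + K / (H s - H θ)) (Ico 0 s)) :
    (ContinuousOn f (Ico 0 s) ∧ StrictMonoOn f (Ico 0 s)) ∧ Tendsto f (𝓝[<] s) atTop := by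
  have hlt : MapsTo H (Ico 0 s) (Iio (H s)) := fun θ hθ => hHm hθ.1 (mem_Ici.2 hs.le) hθ.2
  refine ⟨⟨?_, ?_⟩, ?_⟩
  · refine ContinuousOn.congr ?_ hf
    exact continuousOn_const.add <| continuousOn_const.div (by fun_prop)
      fun θ hθ => (sub_pos.2 (hlt hθ)).ne'
  · exact ((strictMonoOn_const_add_div_sub_Iio hK).comp (hHm.mono Ico_subset_Ici_self) hlt).congr
      hf.symm
  · have hH : Tendsto H (𝓝[<] s) (𝓝[<] H s) :=
      tendsto_nhdsWithin_of_tendsto_nhds_of_eventually_within _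
        (hHc.continuousAt.tendsto.mono_left nhdsWithin_le_nhds)
        (eventually_of_mem (Ico_mem_nhdsLT hs) fun _ hθ => hlt hθ)
    exact ((tendsto_const_add_div_sub_nhdsLT hK).comp hH).congr'
      (eventually_of_mem (Ico_mem_nhdsLT hs) fun _ hθ => (hf hθ).symm)

theorem continuousOn_strictMonoOn_tendsto_above_of_eqOn (hK : 0 < K) (hs : 0 < s)
    (hHc : Continuous H) (hHm : StrictMonoOn H (Ici 0)) (hHtop : Tendsto H atTop atTop)
    (hf : EqOn f (fun θ => L + K / (H s - H θ)) (Ioi s)) :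
    (ContinuousOn f (Ioi s) ∧ StrictMonoOn f (Ioi s) ∧ Tendsto f (𝓝[>] s) atBot) ∧
      Tendsto f atTop (𝓝 L) := by
  have hsub : Ioi s ⊆ Ici 0 := fun θ hθ => mem_Ici.2 (hs.trans hθ).le
  have hgt : MapsTo H (Ioi s) (Ioi (H s)) := fun θ hθ => hHm (mem_Ici.2 hs.le) (hsub hθ) hθ
  refine ⟨⟨?_, ?_, ?_⟩, ?_⟩
  · refine ContinuousOn.congr ?_ hf
    exact continuousOn_const.add <| continuousOn_const.div (by fun_prop)
      fun θ hθ => (sub_neg.2 (hgt hθ)).ne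
  · exact ((strictMonoOn_const_add_div_sub_Ioi hK).comp (hHm.mono hsub) hgt).congr hf.symm
  · have hH : Tendsto H (𝓝[>] s) (𝓝[>] H s) :=
      tendsto_nhdsWithin_of_tendsto_nhds_of_eventually_within _
        (hHc.continuousAt.tendsto.mono_left nhdsWithin_le_nhds)
        (eventually_nhdsWithin_of_forall fun _ hθ => hgt hθ)
    exact ((tendsto_const_add_div_sub_nhdsGT hK).comp hH).congr'
      (eventually_nhdsWithin_of_forall fun _ hθ => (hf hθ).symm)
  · exact (tendsto_const_add_div_sub_atTop.comp hHtop).congr'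
      (eventually_of_mem (Ioi_mem_atTop s) fun _ hθ => (hf hθ).symm)

end PoleOfMonotone

theorem Real.tendsto_cosh_atTop : Tendsto cosh atTop atTop :=
  tendsto_atTop_mono (fun x => by rw [cosh_eq]; gcongr; exact le_add_of_nonneg_right (exp_nonneg _))
    (tendsto_exp_atTop.atTop_div_const two_pos)

theorem Real.cosh_log_mul {b : ℝ} (hb : 0 < b) (y : ℝ) :
    cosh (log b * y) = (b ^ y + (b ^ y)⁻¹) / 2 := by
  rw [cosh_eq, exp_neg, ← rpow_def_of_pos hb]

/-- The left side is `-Γ_p(s + θ) Γ_p(s - θ)`, `s = (1+α)/2`, in the variables `b = p`, `x = p^s`,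
`u = p^θ`, `a = p^α`. -/
theorem neg_mul_gammaP_factors_eq {F : Type*} [Field F] {a b x u : F} (hx2 : x ^ 2 = b * a)
    (hb : b ≠ 0) (hx : x ≠ 0) (hu : u ≠ 0) (hxu : x * u ≠ 1) (hux : u ≠ x) :
    -((1 - x * u / b) / (1 - (x * u)⁻¹) * ((1 - x / (u * b)) / (1 - u / x))) =
      -a + x * (b - 1) * (a - 1) / b / ((x + x⁻¹) - (u + u⁻¹)) := by
  have h₁ : x * u - 1 ≠ 0 := sub_ne_zero.2 hxu
  have h₂ : x - u ≠ 0 := sub_ne_zero.2 hux.symm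
  have hden : (x + x⁻¹) - (u + u⁻¹) = (x - u) * (x * u - 1) / (x * u) := by
    field_simp
    ring
  obtain rfl : a = x ^ 2 / b := by rw [hx2]; field_simp
  rw [hden]
  field_simp
  ring

theorem Cfun_eq_const_add_div_cosh_sub_cosh {p : ℕ} (hp : 1 < p) {α θ : ℝ}
    (hθ : θ ≠ (1 + α) / 2) (hθ' : θ ≠ -((1 + α) / 2)) :
    Cfun p α θ = -(p : ℝ) ^ α + (p : ℝ) ^ ((1 + α) / 2) * (p - 1) * ((p : ℝ) ^ α - 1) / (2 * p) /
      (cosh (log p * ((1 + α) / 2)) - cosh (log p * θ)) := by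
  set s := (1 + α) / 2
  have hp1 : 1 < (p : ℝ) := by exact_mod_cast hp
  have hp0 : 0 < (p : ℝ) := by linarith
  have hpow_ne {y z : ℝ} (h : y ≠ z) : (p : ℝ) ^ y ≠ (p : ℝ) ^ z :=
    fun h' => h ((rpow_right_inj hp0 hp1.ne').1 h')
  have hx2 : ((p : ℝ) ^ s) ^ 2 = p * (p : ℝ) ^ α := by
    rw [← rpow_natCast, ← rpow_mul hp0.le, show s * ((2 : ℕ) : ℝ) = 1 + α by push_cast; ring,
      rpow_add hp0, rpow_one]
  have hxu : (p : ℝ) ^ s * (p : ℝ) ^ θ ≠ 1 := by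
    rw [← rpow_add hp0, ← rpow_zero (p : ℝ)]
    exact hpow_ne fun h => hθ' (by linarith)
  have e₁ : (p : ℝ) ^ (s + θ - 1) = (p : ℝ) ^ s * (p : ℝ) ^ θ / p := by
    rw [rpow_sub hp0, rpow_add hp0, rpow_one]
  have e₂ : (p : ℝ) ^ (-(s + θ)) = ((p : ℝ) ^ s * (p : ℝ) ^ θ)⁻¹ := by
    rw [rpow_neg hp0.le, rpow_add hp0]
  have e₃ : (p : ℝ) ^ (s - θ - 1) = (p : ℝ) ^ s / ((p : ℝ) ^ θ * p) := by
    rw [rpow_sub hp0, rpow_sub hp0, rpow_one, div_div]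
  have e₄ : (p : ℝ) ^ (-(s - θ)) = (p : ℝ) ^ θ / (p : ℝ) ^ s := by
    rw [rpow_neg hp0.le, rpow_sub hp0, inv_div]
  rw [Cfun, gammaP, gammaP, e₁, e₂, e₃, e₄, neg_mul_gammaP_factors_eq hx2 hp0.ne'
    (rpow_pos_of_pos hp0 s).ne' (rpow_pos_of_pos hp0 θ).ne' hxu (hpow_ne hθ), cosh_log_mul hp0,
    cosh_log_mul hp0, ← sub_div, div_div_eq_mul_div, mul_comm 2 (p : ℝ), ← div_div,
    div_mul_cancel₀ _ two_ne_zero]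

theorem Cfun_properties_general (p : ℕ) (hp : p.Prime) (α : ℝ) (hα0 : 0 < α) :
    Cfun p α 0 = -(gammaP p ((1 + α) / 2)) ^ 2 ∧
    Cfun p α ((1 - α) / 2) = 0 ∧
    (ContinuousOn (Cfun p α) (Set.Ico 0 ((1 + α) / 2)) ∧
      StrictMonoOn (Cfun p α) (Set.Ico 0 ((1 + α) / 2))) ∧
    Tendsto (Cfun p α) (nhdsWithin ((1 + α) / 2) (Set.Iio ((1 + α) / 2))) atTop ∧
    (ContinuousOn (Cfun p α) (Set.Ioi ((1 + α) / 2)) ∧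
      StrictMonoOn (Cfun p α) (Set.Ioi ((1 + α) / 2)) ∧
      Tendsto (Cfun p α) (nhdsWithin ((1 + α) / 2) (Set.Ioi ((1 + α) / 2))) atBot) ∧
    (Tendsto (Cfun p α) atTop (nhds (-(p : ℝ) ^ α)) ∧ -(p : ℝ) ^ α < Cfun p α 0) := by
  have hp1 : 1 < (p : ℝ) := by exact_mod_cast hp.one_lt
  have hs : 0 < (1 + α) / 2 := by linarith
  set H : ℝ → ℝ := fun θ => cosh (log p * θ)
  have hHm : StrictMonoOn H (Ici 0) :=
    cosh_strictMonoOn.comp ((strictMono_mul_left_of_pos (log_pos hp1)).strictMonoOn _)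
      fun θ hθ => mem_Ici.2 (mul_nonneg (log_nonneg hp1.le) hθ)
  have hHtop : Tendsto H atTop atTop :=
    tendsto_cosh_atTop.comp (tendsto_id.const_mul_atTop (log_pos hp1))
  set K := (p : ℝ) ^ ((1 + α) / 2) * (p - 1) * ((p : ℝ) ^ α - 1) / (2 * p)
  have hK : 0 < K := div_pos (mul_pos (mul_pos (rpow_pos_of_pos (by linarith) _) (by linarith))
    (by linarith [one_lt_rpow hp1 hα0])) (by linarith)
  have hC : ∀ θ, 0 ≤ θ → θ ≠ (1 + α) / 2 →
      Cfun p α θ = -(p : ℝ) ^ α + K / (H ((1 + α) / 2) - H θ) :=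
    fun θ hθ hθs => Cfun_eq_const_add_div_cosh_sub_cosh hp.one_lt hθs (by linarith)
  obtain ⟨below, tendsto_below⟩ := continuousOn_strictMonoOn_tendsto_below_of_eqOn hK hs
    (by fun_prop) hHm fun θ hθ => hC θ hθ.1 hθ.2.ne
  obtain ⟨above, tendsto_atTop⟩ := continuousOn_strictMonoOn_tendsto_above_of_eqOn hK hs
    (by fun_prop) hHm hHtop fun θ hθ => hC θ (hs.trans hθ).le hθ.ne'
  refine ⟨by rw [Cfun, add_zero, sub_zero, sq], ?_, below, tendsto_below, above, tendsto_atTop, ?_⟩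
  · rw [Cfun, show (1 + α) / 2 + (1 - α) / 2 = 1 by ring]
    simp [gammaP]
  · rw [hC 0 le_rfl hs.ne]
    exact lt_add_of_pos_right _ (div_pos hK (sub_pos.2 (hHm self_mem_Ici hs.le hs)))

/-- Properties of `C_α(θ) = -Γ_p((1+α)/2+θ)Γ_p((1+α)/2-θ)` for `0 < α < 1`:
its values at `0` and `(1-α)/2`, continuity and strict monotonicity on
`[0, (1+α)/2)` and on `((1+α)/2, ∞)`, the blow-up `±∞` at `(1+α)/2`, and the
limit `-p^α` at `+∞`, with `-p^α < C_α(0)`. -/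
theorem Cfun_properties (p : ℕ) (hp : p.Prime) (α : ℝ) (hα0 : 0 < α) (hα1 : α < 1) :
    Cfun p α 0 = -(gammaP p ((1 + α) / 2)) ^ 2 ∧
    Cfun p α ((1 - α) / 2) = 0 ∧
    (ContinuousOn (Cfun p α) (Set.Ico 0 ((1 + α) / 2)) ∧
      StrictMonoOn (Cfun p α) (Set.Ico 0 ((1 + α) / 2))) ∧
    Tendsto (Cfun p α) (nhdsWithin ((1 + α) / 2) (Set.Iio ((1 + α) / 2))) atTop ∧
    (ContinuousOn (Cfun p α) (Set.Ioi ((1 + α) / 2)) ∧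
      StrictMonoOn (Cfun p α) (Set.Ioi ((1 + α) / 2)) ∧
      Tendsto (Cfun p α) (nhdsWithin ((1 + α) / 2) (Set.Ioi ((1 + α) / 2))) atBot) ∧
    (Tendsto (Cfun p α) atTop (nhds (-(p : ℝ) ^ α)) ∧ -(p : ℝ) ^ α < Cfun p α 0) :=
  Cfun_properties_general p hp α hα0
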